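/- arXiv:1512.08711 — 7 statements merged into one kernel-verified Lean document; each statement's English description precedes it below -/
import Mathlib

section
/- Let H be a real Hilbert space and A, B nonempty closed convex subsets of H with ρ := d_H(A,B) < ∞. Define G(t) := (A + D_{tρ}) ∩ (B + D_{(1-t)ρ}) for t ∈ [0,1], where D_r is the closed ball of radius r centered at 0. Then G(t) is a nonempty closed convex set for every t ∈ [0,1], G(0) = A, G(1) = B, and d_H(G(s), G(t)) = |t - s|·ρ for all s, t ∈ [0,1]; in particular G is a geodesic in the space of nonempty closed convex subsets of H endowed with the Hausdorff distance. -/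
/-!
Since a nonempty closed convex subset of a Hilbert space has nearest points, `A + D_r` is the
closed `r`-thickening of `A`, so `G t` is the set of points within `tρ` of `A` and `(1 - t)ρ`
of `B`. For `s ≤ t`, moving a point of `G s` towards its nearest point in `B` by `(t - s)ρ`
lands in `G t`, and symmetrically points of `G t` moved towards `A` land in `G s`; hence
`d_H(G s, G t) ≤ (t - s)ρ`. Since `d_H(G 0, G 1) = ρ`, the triangle inequality along
`0 ≤ s ≤ t ≤ 1` forces equality.
-/

open Set Metric
open scoped Pointwise

theorem Metric.mem_cthickening_iff_infDist_le {X : Type*} [PseudoMetricSpace X] {E : Set X}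
    {x : X} {δ : ℝ} (hE : E.Nonempty) (hδ : 0 ≤ δ) :
    x ∈ cthickening δ E ↔ infDist x E ≤ δ := by
  rw [mem_cthickening_iff, ENNReal.le_ofReal_iff_toReal_le (infEDist_ne_top hE) hδ, infDist]

theorem Metric.hausdorffEDist_eq_of_le_of_endpoints {X : Type*} [PseudoEMetricSpace X]
    {f : ℝ → Set X} {ρ : ℝ} (hρ : 0 ≤ ρ)
    (hf : ∀ s t, 0 ≤ s → s ≤ t → t ≤ 1 → hausdorffEDist (f s) (f t) ≤ .ofReal ((t - s) * ρ))
    (h01 : ENNReal.ofReal ρ ≤ hausdorffEDist (f 0) (f 1)) {s t : ℝ} (hs : 0 ≤ s) (hst : s ≤ t)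
    (ht : t ≤ 1) : hausdorffEDist (f s) (f t) = .ofReal ((t - s) * ρ) := by
  refine le_antisymm (hf s t hs hst ht) ?_
  have hsum : ENNReal.ofReal (s * ρ) + .ofReal ((t - s) * ρ) + .ofReal ((1 - t) * ρ) ≤
      .ofReal (s * ρ) + hausdorffEDist (f s) (f t) + .ofReal ((1 - t) * ρ) :=
    calc ENNReal.ofReal (s * ρ) + .ofReal ((t - s) * ρ) + .ofReal ((1 - t) * ρ) = .ofReal ρ := by
          rw [← ENNReal.ofReal_add (by nlinarith) (by nlinarith),
            ← ENNReal.ofReal_add (by nlinarith) (by nlinarith)]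
          ring_nf
      _ ≤ hausdorffEDist (f 0) (f 1) := h01
      _ ≤ hausdorffEDist (f 0) (f s) + hausdorffEDist (f s) (f t) + hausdorffEDist (f t) (f 1) :=
        hausdorffEDist_triangle.trans (add_le_add_left hausdorffEDist_triangle _)
      _ ≤ .ofReal (s * ρ) + hausdorffEDist (f s) (f t) + .ofReal ((1 - t) * ρ) := by
        gcongr
        exacts [(hf 0 s le_rfl hs (hst.trans ht)).trans_eq (by rw [sub_zero]),
          hf t 1 (hs.trans hst) ht le_rfl]
  exact ENNReal.le_of_add_le_add_left ENNReal.ofReal_ne_top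
    (ENNReal.le_of_add_le_add_right ENNReal.ofReal_ne_top hsum)

theorem IsClosed.cthickening_zero_inter_eq {X : Type*} [PseudoEMetricSpace X] {A B : Set X}
    (hA : IsClosed A) {ρ : ℝ} (hAB : hausdorffEDist A B ≤ .ofReal ρ) :
    cthickening 0 A ∩ cthickening ρ B = A := by
  rw [cthickening_zero, hA.closure_eq]
  exact inter_eq_left.2 fun a ha ↦ (infEDist_le_hausdorffEDist_of_mem ha).trans hAB

section Hilbert

variable {H : Type*} [NormedAddCommGroup H] [InnerProductSpace ℝ H] [CompleteSpace H]
  {A B : Set H}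

theorem exists_mem_dist_eq_infDist (hBne : B.Nonempty) (hBcl : IsClosed B) (hBcv : Convex ℝ B)
    (x : H) : ∃ b ∈ B, dist x b = infDist x B := by
  obtain ⟨b, hbB, hb⟩ := exists_norm_eq_iInf_of_complete_convex hBne hBcl.isComplete hBcv x
  exact ⟨b, hbB, by simpa only [infDist_eq_iInf, dist_eq_norm] using hb⟩

theorem add_closedBall_zero_eq_cthickening (hAne : A.Nonempty) (hAcl : IsClosed A)
    (hAcv : Convex ℝ A) {r : ℝ} (hr : 0 ≤ r) : A + closedBall (0 : H) r = cthickening r A := by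
  ext x
  constructor
  · rintro ⟨a, ha, v, hv, rfl⟩
    refine mem_cthickening_of_dist_le _ a r A ha ?_
    simpa [dist_eq_norm] using hv
  · intro hx
    obtain ⟨a, haA, ha⟩ := exists_mem_dist_eq_infDist hAne hAcl hAcv x
    refine ⟨a, haA, x - a, ?_, add_sub_cancel a x⟩
    rw [mem_closedBall_zero_iff, ← dist_eq_norm, ha]
    exact (mem_cthickening_iff_infDist_le hAne hr).1 hx

theorem exists_mem_cthickening_dist_le (hBne : B.Nonempty) (hBcl : IsClosed B)
    (hBcv : Convex ℝ B) {x : H} {r s : ℝ} (hr : 0 ≤ r) (hrs : r ≤ s)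
    (hx : x ∈ cthickening s B) : ∃ y ∈ cthickening r B, dist x y ≤ s - r := by
  obtain ⟨b, hbB, hb⟩ := exists_mem_dist_eq_infDist hBne hBcl hBcv x
  have hbs : dist x b ≤ s := hb ▸ (mem_cthickening_iff_infDist_le hBne (hr.trans hrs)).1 hx
  rcases le_or_gt (dist x b) r with hbr | hrb
  · exact ⟨x, mem_cthickening_of_dist_le x b r B hbB hbr, by simpa using hrs⟩
  · have hd : 0 < dist b x := by rw [dist_comm]; linarith
    have hc : r / dist b x ≤ 1 := div_le_one_of_le₀ (by rw [dist_comm]; linarith) hd.le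
    refine ⟨AffineMap.lineMap b x (r / dist b x), mem_cthickening_of_dist_le _ b r B hbB ?_, ?_⟩
    · rw [dist_lineMap_left, Real.norm_of_nonneg (div_nonneg hr hd.le), div_mul_cancel₀ _ hd.ne']
    · rw [dist_comm, dist_lineMap_right, Real.norm_of_nonneg (sub_nonneg.2 hc), sub_mul,
        div_mul_cancel₀ _ hd.ne', one_mul, dist_comm]
      linarith

theorem exists_mem_inter_cthickening_dist_le (hBne : B.Nonempty) (hBcl : IsClosed B)
    (hBcv : Convex ℝ B) {x : H} {α α' β β' : ℝ} (hα : 0 ≤ α) (hβ' : 0 ≤ β') (hβ : β' ≤ β)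
    (hα' : α + (β - β') ≤ α') (hx : x ∈ cthickening α A ∩ cthickening β B) :
    ∃ y ∈ cthickening α' A ∩ cthickening β' B, dist x y ≤ β - β' := by
  obtain ⟨y, hyB, hxy⟩ := exists_mem_cthickening_dist_le hBne hBcl hBcv hβ' hβ hx.2
  have hyA : y ∈ cthickening (β - β' + α) A :=
    cthickening_cthickening_subset (sub_nonneg.2 hβ) hα A
      (mem_cthickening_of_dist_le y x _ _ hx.1 (dist_comm x y ▸ hxy))
  exact ⟨y, ⟨cthickening_mono (by linarith) A hyA, hyB⟩, hxy⟩

theorem hausdorffEDist_inter_cthickening_le (hAne : A.Nonempty) (hAcl : IsClosed A)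
    (hAcv : Convex ℝ A) (hBne : B.Nonempty) (hBcl : IsClosed B) (hBcv : Convex ℝ B)
    {ρ s t : ℝ} (hρ : 0 ≤ ρ) (hs : 0 ≤ s) (hst : s ≤ t) (ht : t ≤ 1) :
    hausdorffEDist (cthickening (s * ρ) A ∩ cthickening ((1 - s) * ρ) B)
      (cthickening (t * ρ) A ∩ cthickening ((1 - t) * ρ) B) ≤ ENNReal.ofReal ((t - s) * ρ) := by
  have hts : 0 ≤ (t - s) * ρ := mul_nonneg (sub_nonneg.2 hst) hρ
  apply hausdorffEDist_le_of_mem_edist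
  · intro x hx
    obtain ⟨y, hy, hxy⟩ := exists_mem_inter_cthickening_dist_le hBne hBcl hBcv (α' := t * ρ)
      (mul_nonneg hs hρ) (mul_nonneg (sub_nonneg.2 ht) hρ) (by nlinarith) (by linarith) hx
    exact ⟨y, hy, (edist_le_ofReal hts).2 (by linarith)⟩
  · intro y hy
    rw [inter_comm] at hy
    obtain ⟨x, hx, hyx⟩ := exists_mem_inter_cthickening_dist_le hAne hAcl hAcv
      (α' := (1 - s) * ρ) (mul_nonneg (by linarith) hρ) (mul_nonneg hs hρ) (by nlinarith)
      (by linarith) hy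
    rw [inter_comm] at hx
    exact ⟨x, hx, (edist_le_ofReal hts).2 (by linarith)⟩

end Hilbert

/-- The family `G(t) = (A + D_{tρ}) ∩ (B + D_{(1-t)ρ})`, `ρ = d_H(A,B)`, is a geodesic
connecting `A` to `B` in the space of nonempty closed convex subsets of a real Hilbert
space endowed with the Hausdorff distance. -/
theorem stmt_8 {H : Type*} [NormedAddCommGroup H] [InnerProductSpace ℝ H] [CompleteSpace H]
    (A B : Set H) (hAne : A.Nonempty) (hAcl : IsClosed A) (hAcv : Convex ℝ A)
    (hBne : B.Nonempty) (hBcl : IsClosed B) (hBcv : Convex ℝ B)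
    (hfin : EMetric.hausdorffEdist A B ≠ ⊤)
    (ρ : ℝ) (hρ : ρ = (EMetric.hausdorffEdist A B).toReal)
    (G : ℝ → Set H)
    (hG : ∀ t, G t = (A + Metric.closedBall (0:H) (t * ρ))
        ∩ (B + Metric.closedBall (0:H) ((1 - t) * ρ))) :
    (∀ t ∈ Set.Icc (0:ℝ) 1, (G t).Nonempty ∧ IsClosed (G t) ∧ Convex ℝ (G t)) ∧
    G 0 = A ∧ G 1 = B ∧
    ∀ s ∈ Set.Icc (0:ℝ) 1, ∀ t ∈ Set.Icc (0:ℝ) 1,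
      EMetric.hausdorffEdist (G s) (G t) = ENNReal.ofReal (|t - s| * ρ) := by
  simp only [EMetric.hausdorffEdist] at hfin hρ ⊢
  have hρ0 : 0 ≤ ρ := hρ ▸ ENNReal.toReal_nonneg
  have hAB : hausdorffEDist A B = ENNReal.ofReal ρ := by rw [hρ, ENNReal.ofReal_toReal hfin]
  have hGt : ∀ t ∈ Icc (0 : ℝ) 1, G t = cthickening (t * ρ) A ∩ cthickening ((1 - t) * ρ) B := by
    rintro t ⟨ht0, ht1⟩
    rw [hG, add_closedBall_zero_eq_cthickening hAne hAcl hAcv (mul_nonneg ht0 hρ0),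
      add_closedBall_zero_eq_cthickening hBne hBcl hBcv (mul_nonneg (sub_nonneg.2 ht1) hρ0)]
  have hG0 : G 0 = A := by
    rw [hGt 0 (left_mem_Icc.2 zero_le_one), zero_mul, sub_zero, one_mul]
    exact hAcl.cthickening_zero_inter_eq hAB.le
  have hG1 : G 1 = B := by
    rw [hGt 1 (right_mem_Icc.2 zero_le_one), one_mul, sub_self, zero_mul, inter_comm]
    exact hBcl.cthickening_zero_inter_eq (hausdorffEDist_comm.trans hAB).le
  have hle : ∀ s t, 0 ≤ s → s ≤ t → t ≤ 1 →
      hausdorffEDist (G s) (G t) ≤ .ofReal ((t - s) * ρ) := fun s t hs hst ht ↦ by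
    rw [hGt s ⟨hs, hst.trans ht⟩, hGt t ⟨hs.trans hst, ht⟩]
    exact hausdorffEDist_inter_cthickening_le hAne hAcl hAcv hBne hBcl hBcv hρ0 hs hst ht
  have h01 : ENNReal.ofReal ρ ≤ hausdorffEDist (G 0) (G 1) := by rw [hG0, hG1, hAB]
  refine ⟨fun t ht ↦ ⟨?_, ?_, ?_⟩, hG0, hG1, fun s hs t ht ↦ ?_⟩
  · exact nonempty_of_hausdorffEDist_ne_top (hG0 ▸ hAne)
      (ne_top_of_le_ne_top ENNReal.ofReal_ne_top (hle 0 t le_rfl ht.1 ht.2))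
  · exact hGt t ht ▸ isClosed_cthickening.inter isClosed_cthickening
  · exact hG t ▸ (hAcv.add (convex_closedBall 0 _)).inter (hBcv.add (convex_closedBall 0 _))
  · rcases le_total s t with hst | hts
    · rw [abs_of_nonneg (sub_nonneg.2 hst)]
      exact hausdorffEDist_eq_of_le_of_endpoints hρ0 hle h01 hs.1 hst ht.2
    · rw [abs_sub_comm, abs_of_nonneg (sub_nonneg.2 hts), hausdorffEDist_comm]
      exact hausdorffEDist_eq_of_le_of_endpoints hρ0 hle h01 ht.1 hts hs.2
end

section
/- Let H be a real Hilbert space and A, B nonempty closed convex subsets with ρ := d_H(A,B) < ∞, and let G(t) := (A + D_{tρ}) ∩ (B + D_{(1-t)ρ}). Fix u₀ ∈ A, and let t₀ ∈ [0,1] be the unique number with ‖u₀ - Proj_B(u₀)‖ = (1 - t₀)ρ (assume ρ > 0 and u₀ ≠ Proj_B(u₀)). Define y : [0,1] → H by y(t) = u₀ for t ∈ [0,t₀], y(t) = u₀ + ((t - t₀)/(1 - t₀))(Proj_B(u₀) - u₀) for t ∈ [t₀,1). Then y is Lipschitz with y(t) ∈ G(t) for all t, y(0) = u₀, and -y'(t)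 lies in the normal cone N_{G(t)}(y(t)) for a.e. t ∈ [0,1]. -/
open Set MeasureTheory AffineMap Metric
open scoped Pointwise
open scoped RealInnerProductSpace

/-!
With `s(t) = max (t - t₀) 0 / (1 - t₀)`, the solution is `y(t) = lineMap u₀ b (s t)`, a point of the
segment `[u₀, b]` at distance `s ‖u₀ - b‖ ≤ tρ` from `u₀ ∈ A` and `(1 - s) ‖u₀ - b‖ ≤ (1 - t)ρ`
from `b ∈ B`, hence in `G(t)`. Before `t₀` the solution is at rest. After `t₀` its velocity is a
positive multiple of `b - u₀`; the variational inequality of the projection puts `B + D_r` in the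
half-space `⟪u₀ - b, · - b⟫ ≤ r ‖u₀ - b‖`, whose boundary contains `y(t)` for `r = (1 - t)ρ`,
so `-y'(t)` is normal to `G(t) ⊆ B + D_{(1-t)ρ}` at `y(t)`.
-/

theorem closedBall_subset_add_closedBall_zero {E : Type*} [SeminormedAddCommGroup E]
    {A : Set E} {a : E} (ha : a ∈ A) (r : ℝ) :
    closedBall a r ⊆ A + closedBall 0 r := by
  rw [← singleton_add_closedBall_zero]
  exact add_subset_add_right (singleton_subset_iff.2 ha)

theorem lineMap_mem_add_closedBall_inter_add_closedBall {E : Type*} [SeminormedAddCommGroup E]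
    [NormedSpace ℝ E] {A B : Set E} {a b : E} (ha : a ∈ A) (hb : b ∈ B) {s r₁ r₂ : ℝ}
    (hs : s ∈ Icc (0 : ℝ) 1) (h₁ : s * ‖a - b‖ ≤ r₁) (h₂ : (1 - s) * ‖a - b‖ ≤ r₂) :
    lineMap a b s ∈ (A + closedBall 0 r₁) ∩ (B + closedBall 0 r₂) := by
  refine ⟨closedBall_subset_add_closedBall_zero ha r₁ ?_,
    closedBall_subset_add_closedBall_zero hb r₂ ?_⟩
  · rwa [mem_closedBall, dist_lineMap_left, Real.norm_of_nonneg hs.1, dist_eq_norm]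
  · rwa [mem_closedBall, dist_lineMap_right, Real.norm_of_nonneg (sub_nonneg.2 hs.2),
      dist_eq_norm]

section InnerProduct

variable {H : Type*} [NormedAddCommGroup H] [InnerProductSpace ℝ H] {B : Set H} {u b v : H}

theorem inner_sub_le_of_mem_add_closedBall (hproj : ∀ w ∈ B, ⟪u - b, w - b⟫ ≤ 0) {r : ℝ}
    (hv : v ∈ B + closedBall 0 r) : ⟪u - b, v - b⟫ ≤ r * ‖u - b‖ := by
  obtain ⟨w, hw, e, he, rfl⟩ := hv
  rw [mem_closedBall_zero_iff] at he
  calc ⟪u - b, w + e - b⟫ = ⟪u - b, w - b⟫ + ⟪u - b, e⟫ := by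
        rw [← inner_add_right, add_sub_right_comm]
    _ ≤ 0 + ‖u - b‖ * ‖e‖ := add_le_add (hproj w hw) (real_inner_le_norm _ _)
    _ ≤ r * ‖u - b‖ := by nlinarith [norm_nonneg (u - b)]

theorem inner_sub_lineMap_nonpos (hproj : ∀ w ∈ B, ⟪u - b, w - b⟫ ≤ 0) {r s : ℝ}
    (hv : v ∈ B + closedBall 0 r) (hr : r ≤ (1 - s) * ‖u - b‖) :
    ⟪u - b, v - lineMap u b s⟫ ≤ 0 := by
  have hline : v - lineMap u b s = (v - b) - (1 - s) • (u - b) := by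
    rw [lineMap_apply_module]; module
  rw [hline, inner_sub_right, real_inner_smul_right, real_inner_self_eq_norm_sq]
  nlinarith [inner_sub_le_of_mem_add_closedBall hproj hv, norm_nonneg (u - b)]

end InnerProduct

noncomputable def rampFrom (t₀ t : ℝ) : ℝ := max (t - t₀) 0 / (1 - t₀)

section rampFrom

variable {t₀ t : ℝ}

theorem rampFrom_of_le (h : t ≤ t₀) : rampFrom t₀ t = 0 := by
  simp [rampFrom, max_eq_right (sub_nonpos.2 h)]

theorem rampFrom_of_ge (h : t₀ ≤ t) : rampFrom t₀ t = (t - t₀) / (1 - t₀) := by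
  rw [rampFrom, max_eq_left (sub_nonneg.2 h)]

theorem lipschitzWith_rampFrom : LipschitzWith ‖(1 - t₀)⁻¹‖₊ (rampFrom t₀) := by
  have : rampFrom t₀ = fun t => (1 - t₀)⁻¹ • max (t - t₀) 0 := by
    ext t; rw [rampFrom, smul_eq_mul, inv_mul_eq_div]
  rw [this]
  have h := (lipschitzWith_smul (1 - t₀)⁻¹).comp
    ((IsometryEquiv.subRight t₀).isometry.lipschitz.max_const 0)
  rw [mul_one] at h
  exact h

theorem rampFrom_mul (h : t₀ < 1) : rampFrom t₀ t * (1 - t₀) = max (t - t₀) 0 :=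
  div_mul_cancel₀ _ (sub_ne_zero.2 h.ne')

theorem one_sub_rampFrom_mul (h : t₀ < 1) :
    (1 - rampFrom t₀ t) * (1 - t₀) = min (1 - t₀) (1 - t) := by
  rw [sub_mul, rampFrom_mul h, one_mul, ← min_sub_sub_left, sub_zero, min_comm,
    sub_sub_sub_cancel_right]

theorem rampFrom_mem_Icc (h : t₀ < 1) (ht : t ≤ 1) : rampFrom t₀ t ∈ Icc (0 : ℝ) 1 := by
  have hpos : 0 < 1 - t₀ := sub_pos.2 h
  refine ⟨div_nonneg (le_max_right _ _) hpos.le, ?_⟩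
  rw [rampFrom, div_le_one hpos]
  exact max_le (by linarith) hpos.le

theorem hasDerivAt_rampFrom_of_lt (h : t < t₀) : HasDerivAt (rampFrom t₀) 0 t :=
  (hasDerivAt_const t (0 : ℝ)).congr_of_eventuallyEq <|
    Filter.mem_of_superset (Iio_mem_nhds h) fun _ hs => rampFrom_of_le (le_of_lt hs)

theorem hasDerivAt_rampFrom_of_gt (h : t₀ < t) : HasDerivAt (rampFrom t₀) (1 - t₀)⁻¹ t := by
  have : HasDerivAt (fun s => (s - t₀) / (1 - t₀)) (1 - t₀)⁻¹ t := by
    simpa [div_eq_mul_inv] using ((hasDerivAt_id t).sub_const t₀).div_const (1 - t₀)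
  exact this.congr_of_eventuallyEq <|
    Filter.mem_of_superset (Ioi_mem_nhds h) fun _ hs => rampFrom_of_ge (le_of_lt hs)

end rampFrom

theorem stmt_9_general {H : Type*} [NormedAddCommGroup H] [InnerProductSpace ℝ H]
    (A B : Set H)
    (ρ : ℝ)
    (G : ℝ → Set H)
    (hG : ∀ t, G t = (A + Metric.closedBall (0:H) (t * ρ))
        ∩ (B + Metric.closedBall (0:H) ((1 - t) * ρ)))
    (u0 : H) (hu0 : u0 ∈ A)
    (b : H) (hb : b ∈ B) (hproj : ∀ v ∈ B, ⟪u0 - b, v - b⟫ ≤ 0)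
    (hneq : u0 ≠ b)
    (t0 : ℝ) (ht0 : t0 ∈ Set.Icc (0:ℝ) 1) (ht0eq : ‖u0 - b‖ = (1 - t0) * ρ)
    (y : ℝ → H)
    (hy : ∀ t, y t = if t ≤ t0 then u0 else u0 + ((t - t0) / (1 - t0)) • (b - u0)) :
    (∃ K : NNReal, LipschitzOnWith K y (Set.Icc 0 1)) ∧
    (∀ t ∈ Set.Icc (0:ℝ) 1, y t ∈ G t) ∧ y 0 = u0 ∧
    ∀ᵐ t ∂(MeasureTheory.volume.restrict (Set.Ioo (0:ℝ) 1)),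
      ∀ d : H, HasDerivAt y d t → ∀ v ∈ G t, ⟪-d, v - y t⟫ ≤ 0 := by
  have hdist : 0 < (1 - t0) * ρ := ht0eq ▸ norm_pos_iff.2 (sub_ne_zero.2 hneq)
  have hρ : 0 < ρ := pos_of_mul_pos_right hdist (sub_nonneg.2 ht0.2)
  have ht0_lt : t0 < 1 := sub_pos.1 (pos_of_mul_pos_left hdist hρ.le)
  obtain rfl : y = fun t => lineMap u0 b (rampFrom t0 t) := by
    funext t
    rw [hy]
    split_ifs with h
    · rw [rampFrom_of_le h, lineMap_apply_zero]
    · rw [rampFrom_of_ge (le_of_not_ge h), lineMap_apply_module', add_comm]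
  refine ⟨⟨_, ((lipschitzWith_lineMap u0 b).comp lipschitzWith_rampFrom).lipschitzOnWith⟩,
    fun t ht => ?_, by simp [rampFrom_of_le ht0.1], ?_⟩
  · rw [hG]
    apply lineMap_mem_add_closedBall_inter_add_closedBall hu0 hb (rampFrom_mem_Icc ht0_lt ht.2)
    · rw [ht0eq, ← mul_assoc, rampFrom_mul ht0_lt]
      exact mul_le_mul_of_nonneg_right (max_le (by linarith [ht0.1]) ht.1) hρ.le
    · rw [ht0eq, ← mul_assoc, one_sub_rampFrom_mul ht0_lt]
      exact mul_le_mul_of_nonneg_right (min_le_right _ _) hρ.le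
  · filter_upwards [Measure.ae_ne _ t0] with t ht d hd v hv
    have hderiv {σ' : ℝ} (h : HasDerivAt (rampFrom t0) σ' t) : d = σ' • (b - u0) :=
      hd.unique (hasDerivAt_lineMap.scomp t h)
    rcases ht.lt_or_gt with hlt | hgt
    · simp [hderiv (hasDerivAt_rampFrom_of_lt hlt)]
    · rw [hderiv (hasDerivAt_rampFrom_of_gt hgt), ← smul_neg, neg_sub, real_inner_smul_left]
      refine mul_nonpos_of_nonneg_of_nonpos (inv_nonneg.2 (sub_nonneg.2 ht0.2))
        (inner_sub_lineMap_nonpos hproj (hG t ▸ hv).2 ?_)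
      rw [ht0eq, ← mul_assoc, one_sub_rampFrom_mul ht0_lt, min_eq_right (by linarith)]

/-- Explicit solution of the sweeping process driven by the geodesic
`G(t) = (A + D_{tρ}) ∩ (B + D_{(1-t)ρ})` of convex sets, with initial point `u₀ ∈ A`:
the solution stays at `u₀` until time `t₀` and then moves affinely towards `Proj_B(u₀)`. -/
theorem stmt_9 {H : Type*} [NormedAddCommGroup H] [InnerProductSpace ℝ H] [CompleteSpace H]
    (A B : Set H) (hAne : A.Nonempty) (hAcl : IsClosed A) (hAcv : Convex ℝ A)
    (hBne : B.Nonempty) (hBcl : IsClosed B) (hBcv : Convex ℝ B)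
    (hfin : EMetric.hausdorffEdist A B ≠ ⊤)
    (ρ : ℝ) (hρ : ρ = (EMetric.hausdorffEdist A B).toReal) (hρpos : 0 < ρ)
    (G : ℝ → Set H)
    (hG : ∀ t, G t = (A + Metric.closedBall (0:H) (t * ρ))
        ∩ (B + Metric.closedBall (0:H) ((1 - t) * ρ)))
    (u0 : H) (hu0 : u0 ∈ A)
    (b : H) (hb : b ∈ B) (hproj : ∀ v ∈ B, ⟪u0 - b, v - b⟫ ≤ 0)
    (hneq : u0 ≠ b)
    (t0 : ℝ) (ht0 : t0 ∈ Set.Icc (0:ℝ) 1) (ht0eq : ‖u0 - b‖ = (1 - t0) * ρ)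
    (y : ℝ → H)
    (hy : ∀ t, y t = if t ≤ t0 then u0 else u0 + ((t - t0) / (1 - t0)) • (b - u0)) :
    (∃ K : NNReal, LipschitzOnWith K y (Set.Icc 0 1)) ∧
    (∀ t ∈ Set.Icc (0:ℝ) 1, y t ∈ G t) ∧ y 0 = u0 ∧
    ∀ᵐ t ∂(MeasureTheory.volume.restrict (Set.Ioo (0:ℝ) 1)),
      ∀ d : H, HasDerivAt y d t → ∀ v ∈ G t, ⟪-d, v - y t⟫ ≤ 0 :=
  stmt_9_general A B ρ G hG u0 hu0 b hb hproj hneq t0 ht0 ht0eq y hy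
end

section
/- Let H be a real Hilbert space, T > 0, and let C : [0,T] → Conv_H be Lipschitz with respect to the Hausdorff distance. Suppose y : [0,T] → H is absolutely continuous (W^{1,1}), y(t) ∈ C(t) for all t, and y'(t) + ∂I_{C(t)}(y(t)) ∋ 0 for a.e. t. Then y is Lipschitz and Lip(y) ≤ Lip(C), i.e. ‖y(t) - y(s)‖ ≤ Lip(C)·|t - s| for all s, t ∈ [0,T]. -/
open Set Filter Topology MeasureTheory
open scoped RealInnerProductSpace

/-!
Let `t` be a point where `y` is differentiable and `-y'(t)` is normal to `C(t)` at `y(t)`. For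
`s < t` the point `y(s) ∈ C(s)` lies within `L (t - s)` of some `v ∈ C(t)`, and normality gives
`⟪y'(t), y(t) - y(s)⟫ ≤ ⟪y'(t), v - y(s)⟫ ≤ ‖y'(t)‖ L (t - s)`. Dividing by `t - s` and letting
`s → t⁻` yields `‖y'(t)‖² ≤ L ‖y'(t)‖`, so `‖y'‖ ≤ L` almost everywhere, and integrating `y'`
gives the Lipschitz bound. Only left difference quotients can be used: normality bounds
`y(t) - v` along `y'(t)`, not `v - y(t)`.
-/

section Integral

variable {E : Type*} [NormedAddCommGroup E] [NormedSpace ℝ E] {T : ℝ} {y y' : ℝ → E}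

theorem ae_hasDerivAt_of_eq_add_integral [CompleteSpace E]
    (hint : IntervalIntegrable y' volume 0 T)
    (hy : ∀ t ∈ Icc 0 T, y t = y 0 + ∫ s in (0:ℝ)..t, y' s) :
    ∀ᵐ u, u ∈ Ioo 0 T → HasDerivAt y (y' u) u := by
  filter_upwards [hint.ae_hasDerivAt_integral] with u hderiv hu
  refine ((hderiv (Icc_subset_uIcc (Ioo_subset_Icc_self hu)) 0 left_mem_uIcc).const_add
    (y 0)).congr_of_eventuallyEq ?_
  filter_upwards [Ioo_mem_nhds hu.1 hu.2] with s hs using hy s (Ioo_subset_Icc_self hs)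

theorem norm_sub_le_of_eq_add_integral {L : ℝ} (hint : IntervalIntegrable y' volume 0 T)
    (hy : ∀ t ∈ Icc 0 T, y t = y 0 + ∫ s in (0:ℝ)..t, y' s)
    (hbound : ∀ᵐ u, u ∈ Ioo 0 T → ‖y' u‖ ≤ L) :
    ∀ s ∈ Icc 0 T, ∀ t ∈ Icc 0 T, ‖y t - y s‖ ≤ L * |t - s| := by
  intro s hs t ht
  have hsub : ∀ a ∈ Icc 0 T, ∀ b ∈ Icc 0 T, IntervalIntegrable y' volume a b :=
    fun a ha b hb ↦ hint.mono_set (uIcc_subset_uIcc (Icc_subset_uIcc ha) (Icc_subset_uIcc hb))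
  have h0 : (0 : ℝ) ∈ Icc 0 T := left_mem_Icc.2 (hs.1.trans hs.2)
  rw [hy t ht, hy s hs, add_sub_add_left_eq_sub,
    intervalIntegral.integral_interval_sub_left (hsub 0 h0 t ht) (hsub 0 h0 s hs)]
  refine intervalIntegral.norm_integral_le_of_norm_le_const_ae ?_
  filter_upwards [hbound, volume.ae_ne T] with u hu huT hst
  have hu' : u ∈ Ioc 0 T := by
    rw [← uIoc_of_le (hs.1.trans hs.2)]
    exact uIoc_subset_uIoc_of_uIcc_subset_uIcc
      (uIcc_subset_uIcc (Icc_subset_uIcc hs) (Icc_subset_uIcc ht)) hst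
  exact hu ⟨hu'.1, hu'.2.lt_of_ne huT⟩

end Integral

section NormalCone

variable {H : Type*} [NormedAddCommGroup H] [InnerProductSpace ℝ H]

theorem inner_sub_le_norm_mul_of_infEDist_le {K : Set H} {a b w : H} {r : ℝ} (hr : 0 ≤ r)
    (hnormal : ∀ v ∈ K, ⟪-w, v - a⟫ ≤ 0) (hb : Metric.infEDist b K ≤ ENNReal.ofReal r) :
    ⟪w, a - b⟫ ≤ ‖w‖ * r := by
  have hclose : ∀ r' > r, ⟪w, a - b⟫ ≤ ‖w‖ * r' := by
    intro r' hr'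
    have hlt : Metric.infEDist b K < ENNReal.ofReal r' :=
      hb.trans_lt ((ENNReal.ofReal_lt_ofReal_iff (hr.trans_lt hr')).2 hr')
    obtain ⟨v, hvK, hbv⟩ := Metric.infEDist_lt_iff.1 hlt
    have hdist : ‖v - b‖ ≤ r' := by
      rw [← dist_eq_norm, dist_comm]
      exact (edist_lt_ofReal.1 hbv).le
    calc ⟪w, a - b⟫ = ⟪-w, v - a⟫ + ⟪w, v - b⟫ := by
          simp only [inner_neg_left, inner_sub_right]; ring
      _ ≤ 0 + ‖w‖ * ‖v - b‖ := add_le_add (hnormal v hvK) (real_inner_le_norm _ _)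
      _ ≤ ‖w‖ * r' := by rw [zero_add]; gcongr
  refine ge_of_tendsto (x := 𝓝[>] r) ?_ (eventually_nhdsWithin_of_forall hclose)
  exact ((continuous_const_mul ‖w‖).tendsto r).mono_left nhdsWithin_le_nhds

theorem norm_le_of_hasDerivWithinAt_Iio_of_infEDist_le {x : ℝ → H} {w : H} {K : Set H}
    {t L : ℝ} (hL : 0 ≤ L) (hx : HasDerivWithinAt x w (Iio t) t)
    (hnormal : ∀ v ∈ K, ⟪-w, v - x t⟫ ≤ 0)
    (hclose : ∀ᶠ s in 𝓝[<] t, Metric.infEDist (x s) K ≤ ENNReal.ofReal (L * (t - s))) :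
    ‖w‖ ≤ L := by
  have hslope := (hasDerivWithinAt_iff_tendsto_slope' self_notMem_Iio).1 hx
  have hw : ⟪w, w⟫ ≤ ‖w‖ * L := by
    refine le_of_tendsto (tendsto_const_nhds.inner hslope) ?_
    filter_upwards [hclose, self_mem_nhdsWithin] with s hs (hst : s < t)
    have hts : 0 < t - s := sub_pos.2 hst
    calc ⟪w, slope x t s⟫ = (t - s)⁻¹ * ⟪w, x t - x s⟫ := by
          rw [slope_def_module, real_inner_smul_right, ← neg_sub t s, inv_neg, ← neg_sub (x t),
            inner_neg_right, neg_mul_neg]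
      _ ≤ (t - s)⁻¹ * (‖w‖ * (L * (t - s))) := by
          gcongr
          exact inner_sub_le_norm_mul_of_infEDist_le (by positivity) hnormal hs
      _ = ‖w‖ * L := by field_simp
  rw [real_inner_self_eq_norm_sq] at hw
  nlinarith [norm_nonneg w]

end NormalCone

theorem stmt_10_general {H : Type*} [NormedAddCommGroup H] [InnerProductSpace ℝ H] [CompleteSpace H]
    (T : ℝ)
    (C : ℝ → Set H)
    (L : ℝ) (hL : 0 ≤ L)
    (hClip : ∀ s ∈ Set.Icc 0 T, ∀ t ∈ Set.Icc 0 T,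
        EMetric.hausdorffEdist (C s) (C t) ≤ ENNReal.ofReal (L * |t - s|))
    (y y' : ℝ → H)
    (hint : IntervalIntegrable y' MeasureTheory.volume 0 T)
    (hy : ∀ t ∈ Set.Icc 0 T, y t = y 0 + ∫ s in (0:ℝ)..t, y' s)
    (hmem : ∀ t ∈ Set.Icc 0 T, y t ∈ C t)
    (hincl : ∀ᵐ t ∂(MeasureTheory.volume.restrict (Set.Ioo 0 T)),
        ∀ v ∈ C t, ⟪-(y' t), v - y t⟫ ≤ 0) :
    ∀ s ∈ Set.Icc 0 T, ∀ t ∈ Set.Icc 0 T, ‖y t - y s‖ ≤ L * |t - s| := by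
  refine norm_sub_le_of_eq_add_integral hint hy ?_
  filter_upwards [ae_hasDerivAt_of_eq_add_integral hint hy,
    (ae_restrict_iff' measurableSet_Ioo).1 hincl] with u hderiv hnormal hu
  refine norm_le_of_hasDerivWithinAt_Iio_of_infEDist_le hL (hderiv hu).hasDerivWithinAt
    (hnormal hu) ?_
  filter_upwards [Ioo_mem_nhdsLT hu.1] with s hs
  have hsI : s ∈ Icc 0 T := ⟨hs.1.le, hs.2.le.trans hu.2.le⟩
  rw [← abs_of_pos (sub_pos.2 hs.2)]
  exact (Metric.infEDist_le_hausdorffEDist_of_mem (hmem s hsI)).trans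
    (hClip s hsI u (Ioo_subset_Icc_self hu))

/-- If `C : [0,T] → Conv_H` is Lipschitz (constant `L`) for the Hausdorff distance and
`y ∈ W^{1,1}(0,T;H)` solves the sweeping process `y(t) ∈ C(t)`,
`y'(t) + N_{C(t)}(y(t)) ∋ 0` a.e., then `y` is Lipschitz with constant at most `L`. -/
theorem stmt_10 {H : Type*} [NormedAddCommGroup H] [InnerProductSpace ℝ H] [CompleteSpace H]
    (T : ℝ) (hT : 0 < T)
    (C : ℝ → Set H)
    (hC : ∀ t ∈ Set.Icc 0 T, (C t).Nonempty ∧ IsClosed (C t) ∧ Convex ℝ (C t))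
    (L : ℝ) (hL : 0 ≤ L)
    (hClip : ∀ s ∈ Set.Icc 0 T, ∀ t ∈ Set.Icc 0 T,
        EMetric.hausdorffEdist (C s) (C t) ≤ ENNReal.ofReal (L * |t - s|))
    (y y' : ℝ → H)
    (hint : IntervalIntegrable y' MeasureTheory.volume 0 T)
    (hy : ∀ t ∈ Set.Icc 0 T, y t = y 0 + ∫ s in (0:ℝ)..t, y' s)
    (hmem : ∀ t ∈ Set.Icc 0 T, y t ∈ C t)
    (hincl : ∀ᵐ t ∂(MeasureTheory.volume.restrict (Set.Ioo 0 T)),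
        ∀ v ∈ C t, ⟪-(y' t), v - y t⟫ ≤ 0) :
    ∀ s ∈ Set.Icc 0 T, ∀ t ∈ Set.Icc 0 T, ‖y t - y s‖ ≤ L * |t - s| :=
  stmt_10_general T C L hL hClip y y' hint hy hmem hincl
end

section
/- Let H be a real Hilbert space, Z ⊆ H nonempty closed convex, T > 0, z₀ ∈ Z, and u ∈ W^{1,1}(0,T;H). Suppose y₁, y₂ ∈ W^{1,1}(0,T;H) both satisfy: u(t) - y_i(t) ∈ Z for all t ∈ [0,T], ⟨z - u(t) + y_i(t), y_i'(t)⟩ ≤ 0 for all z ∈ Z and a.e. t, and u(0) - y_i(0) = z₀. Then y₁ = y₂. -/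
/-!
Testing the variational inequality of each solution with the state `u - y` of the other one
gives the monotonicity `⟪y₁ - y₂, v₁ - v₂⟫ ≤ 0` a.e. Since `w = y₁ - y₂` is the primitive of
`g = v₁ - v₂` and vanishes at `0`, Fubini on the square `[0,t]²` split along its diagonal gives
`‖w t‖² = 2 ∫₀ᵗ ⟪g r, w r⟫ dr ≤ 0`, the integrated form of `d/dt ‖w‖² = 2 ⟪w', w⟫`, valid
without any pointwise differentiability of `w`.
-/

open Set Filter Topology MeasureTheory
open scoped RealInnerProductSpace

section EnergyIdentity

variable {α H : Type*} [MeasurableSpace α] [NormedAddCommGroup H] [InnerProductSpace ℝ H]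
  {ν : Measure α} {f : α → H}

theorem integrable_inner_prod (hf : Integrable f ν) :
    Integrable (fun p : α × α => ⟪f p.1, f p.2⟫) (ν.prod ν) := by
  refine (hf.norm.mul_prod hf.norm).mono' (hf.1.comp_fst.inner hf.1.comp_snd) ?_
  filter_upwards with p
  simpa using abs_real_inner_le_norm (f p.1) (f p.2)

variable [CompleteSpace H] [SFinite ν]

theorem inner_integral_self_eq_integral_prod (hf : Integrable f ν) :
    ⟪∫ s, f s ∂ν, ∫ s, f s ∂ν⟫ = ∫ p, ⟪f p.1, f p.2⟫ ∂(ν.prod ν) := by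
  rw [integral_prod _ (integrable_inner_prod hf)]
  calc ⟪∫ s, f s ∂ν, ∫ s, f s ∂ν⟫ = ∫ r, ⟪∫ s, f s ∂ν, f r⟫ ∂ν := (integral_inner hf _).symm
    _ = ∫ r, ⟪f r, ∫ s, f s ∂ν⟫ ∂ν := by simp_rw [real_inner_comm (f _)]
    _ = ∫ r, ∫ s, ⟪f r, f s⟫ ∂ν ∂ν := by simp_rw [integral_inner hf]

theorem setIntegral_prod_inner (hf : Integrable f ν) {S : Set (α × α)} (hS : MeasurableSet S) :
    ∫ p in S, ⟪f p.1, f p.2⟫ ∂(ν.prod ν) = ∫ r, ⟪f r, ∫ s in Prod.mk r ⁻¹' S, f s ∂ν⟫ ∂ν := by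
  rw [← integral_indicator hS, integral_prod _ ((integrable_inner_prod hf).indicator hS)]
  refine integral_congr_ae (Eventually.of_forall fun r => ?_)
  dsimp only
  rw [← integral_inner hf.integrableOn, ← integral_indicator (measurable_prodMk_left hS)]
  rfl

end EnergyIdentity

theorem norm_sq_integral_eq_two_mul_integral_inner_integral_Iic {H : Type*}
    [NormedAddCommGroup H] [InnerProductSpace ℝ H] [CompleteSpace H] {ν : Measure ℝ} [SFinite ν]
    [NullSingletonClass ν] {f : ℝ → H} (hf : Integrable f ν) :
    ‖∫ s, f s ∂ν‖ ^ 2 = 2 * ∫ r, ⟪f r, ∫ s in Iic r, f s ∂ν⟫ ∂ν := by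
  set S : Set (ℝ × ℝ) := {p | p.2 ≤ p.1}
  have hS : MeasurableSet S := measurableSet_le measurable_snd measurable_fst
  have hlower : ∫ p in S, ⟪f p.1, f p.2⟫ ∂(ν.prod ν) = ∫ r, ⟪f r, ∫ s in Iic r, f s ∂ν⟫ ∂ν :=
    setIntegral_prod_inner hf hS
  have hupper : ∫ p in Sᶜ, ⟪f p.1, f p.2⟫ ∂(ν.prod ν) = ∫ r, ⟪f r, ∫ s in Iic r, f s ∂ν⟫ ∂ν := by
    have hswap : Prod.swap ⁻¹' Sᶜ = {p : ℝ × ℝ | p.2 < p.1} := by ext p; simp [S]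
    calc ∫ p in Sᶜ, ⟪f p.1, f p.2⟫ ∂(ν.prod ν)
        = ∫ p in Prod.swap ⁻¹' Sᶜ, ⟪f p.2, f p.1⟫ ∂(ν.prod ν) := by
          rw [← integral_indicator hS.compl, ← integral_prod_swap,
            ← integral_indicator (hS.compl.preimage measurable_swap)]
          rfl
      _ = ∫ r, ⟪f r, ∫ s in Iio r, f s ∂ν⟫ ∂ν := by
          have hsymm : (fun p : ℝ × ℝ => ⟪f p.2, f p.1⟫) = fun p => ⟪f p.1, f p.2⟫ :=
            funext fun p => real_inner_comm _ _
          rw [hswap, hsymm]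
          exact setIntegral_prod_inner hf (measurableSet_lt measurable_snd measurable_fst)
      _ = ∫ r, ⟪f r, ∫ s in Iic r, f s ∂ν⟫ ∂ν := by simp_rw [setIntegral_congr_set Iio_ae_eq_Iic]
  rw [← real_inner_self_eq_norm_sq, inner_integral_self_eq_integral_prod hf,
    ← integral_add_compl hS (integrable_inner_prod hf), hlower, hupper, two_mul]

theorem norm_sq_intervalIntegral_eq_two_mul_intervalIntegral_inner {H : Type*}
    [NormedAddCommGroup H] [InnerProductSpace ℝ H] [CompleteSpace H] {a b : ℝ} (hab : a ≤ b)
    {f : ℝ → H} (hf : IntervalIntegrable f volume a b) :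
    ‖∫ s in a..b, f s‖ ^ 2 = 2 * ∫ r in a..b, ⟪f r, ∫ s in a..r, f s⟫ := by
  rw [intervalIntegral.integral_of_le hab, intervalIntegral.integral_of_le hab,
    norm_sq_integral_eq_two_mul_integral_inner_integral_Iic (hf.1 : Integrable f _)]
  congr 1
  refine setIntegral_congr_fun measurableSet_Ioc fun r hr => ?_
  rw [Measure.restrict_restrict measurableSet_Iic, Iic_inter_Ioc_of_le hr.2,
    intervalIntegral.integral_of_le hr.1.le]

theorem intervalIntegral_eq_zero_of_inner_nonpos {H : Type*}
    [NormedAddCommGroup H] [InnerProductSpace ℝ H] [CompleteSpace H] {a b : ℝ}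
    {g : ℝ → H} (hg : IntervalIntegrable g volume a b)
    (hinner : ∀ᵐ r ∂(volume.restrict (Ioo a b)), ⟪g r, ∫ s in a..r, g s⟫ ≤ 0) :
    ∀ t ∈ Icc a b, ∫ s in a..t, g s = 0 := by
  intro t ht
  have hgt : IntervalIntegrable g volume a t :=
    hg.mono_set (uIcc_subset_uIcc_left (mem_uIcc_of_le ht.1 ht.2))
  have hinner_t : ∀ᵐ r ∂(volume.restrict (Ioc a t)), ⟪g r, ∫ s in a..r, g s⟫ ≤ 0 := by
    rw [← Measure.restrict_congr_set Ioo_ae_eq_Ioc]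
    exact ae_restrict_of_ae_restrict_of_subset (Ioo_subset_Ioo_right ht.2) hinner
  have hnonpos : ‖∫ s in a..t, g s‖ ^ 2 ≤ 0 := by
    rw [norm_sq_intervalIntegral_eq_two_mul_intervalIntegral_inner ht.1 hgt,
      intervalIntegral.integral_of_le ht.1]
    have := integral_nonpos_of_ae hinner_t
    linarith
  simpa using le_antisymm hnonpos (sq_nonneg _)

theorem stmt_11_general {H : Type*} [NormedAddCommGroup H] [InnerProductSpace ℝ H] [CompleteSpace H]
    (Z : Set H)
    (T : ℝ) (z0 : H)
    (u : ℝ → H)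
    (y₁ y₂ v₁ v₂ : ℝ → H)
    (h1int : IntervalIntegrable v₁ MeasureTheory.volume 0 T)
    (h2int : IntervalIntegrable v₂ MeasureTheory.volume 0 T)
    (h1 : ∀ t ∈ Set.Icc 0 T, y₁ t = y₁ 0 + ∫ s in (0:ℝ)..t, v₁ s)
    (h2 : ∀ t ∈ Set.Icc 0 T, y₂ t = y₂ 0 + ∫ s in (0:ℝ)..t, v₂ s)
    (h1mem : ∀ t ∈ Set.Icc 0 T, u t - y₁ t ∈ Z)
    (h2mem : ∀ t ∈ Set.Icc 0 T, u t - y₂ t ∈ Z)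
    (h1var : ∀ᵐ t ∂(MeasureTheory.volume.restrict (Set.Ioo 0 T)),
        ∀ z ∈ Z, ⟪z - u t + y₁ t, v₁ t⟫ ≤ 0)
    (h2var : ∀ᵐ t ∂(MeasureTheory.volume.restrict (Set.Ioo 0 T)),
        ∀ z ∈ Z, ⟪z - u t + y₂ t, v₂ t⟫ ≤ 0)
    (h1ic : u 0 - y₁ 0 = z0) (h2ic : u 0 - y₂ 0 = z0) :
    Set.EqOn y₁ y₂ (Set.Icc 0 T) := by
  have hy0 : y₁ 0 = y₂ 0 := sub_right_injective (h1ic.trans h2ic.symm)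
  have hdiff : ∀ r ∈ Icc 0 T, y₁ r - y₂ r = ∫ s in 0..r, (v₁ s - v₂ s) := by
    intro r hr
    have hsub : uIcc 0 r ⊆ uIcc 0 T := uIcc_subset_uIcc_left (mem_uIcc_of_le hr.1 hr.2)
    rw [h1 r hr, h2 r hr, hy0, add_sub_add_left_eq_sub,
      intervalIntegral.integral_sub (h1int.mono_set hsub) (h2int.mono_set hsub)]
  have hinner : ∀ᵐ r ∂(volume.restrict (Ioo 0 T)),
      ⟪v₁ r - v₂ r, ∫ s in 0..r, (v₁ s - v₂ s)⟫ ≤ 0 := by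
    filter_upwards [h1var, h2var, ae_restrict_mem measurableSet_Ioo] with r hr₁ hr₂ hr
    have e₁ := hr₁ _ (h2mem r (Ioo_subset_Icc_self hr))
    have e₂ := hr₂ _ (h1mem r (Ioo_subset_Icc_self hr))
    rw [sub_sub_cancel_left, neg_add_eq_sub] at e₁ e₂
    rw [← neg_sub, inner_neg_left] at e₂
    rw [← hdiff r (Ioo_subset_Icc_self hr), real_inner_comm, inner_sub_right]
    linarith
  intro t ht
  rw [← sub_eq_zero, hdiff t ht]
  exact intervalIntegral_eq_zero_of_inner_nonpos (h1int.sub h2int) hinner t ht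

/-- Uniqueness for the play operator: two `W^{1,1}` solutions of the evolution variational
inequality `u(t) - y(t) ∈ Z`, `⟪z - u(t) + y(t), y'(t)⟫ ≤ 0` for all `z ∈ Z` a.e., with the
same initial condition `u(0) - y(0) = z₀`, coincide on `[0,T]`. -/
theorem stmt_11 {H : Type*} [NormedAddCommGroup H] [InnerProductSpace ℝ H] [CompleteSpace H]
    (Z : Set H) (hZne : Z.Nonempty) (hZcl : IsClosed Z) (hZcv : Convex ℝ Z)
    (T : ℝ) (hT : 0 < T) (z0 : H) (hz0 : z0 ∈ Z)
    (u u' : ℝ → H)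
    (huint : IntervalIntegrable u' MeasureTheory.volume 0 T)
    (hu : ∀ t ∈ Set.Icc 0 T, u t = u 0 + ∫ s in (0:ℝ)..t, u' s)
    (y₁ y₂ v₁ v₂ : ℝ → H)
    (h1int : IntervalIntegrable v₁ MeasureTheory.volume 0 T)
    (h2int : IntervalIntegrable v₂ MeasureTheory.volume 0 T)
    (h1 : ∀ t ∈ Set.Icc 0 T, y₁ t = y₁ 0 + ∫ s in (0:ℝ)..t, v₁ s)
    (h2 : ∀ t ∈ Set.Icc 0 T, y₂ t = y₂ 0 + ∫ s in (0:ℝ)..t, v₂ s)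
    (h1mem : ∀ t ∈ Set.Icc 0 T, u t - y₁ t ∈ Z)
    (h2mem : ∀ t ∈ Set.Icc 0 T, u t - y₂ t ∈ Z)
    (h1var : ∀ᵐ t ∂(MeasureTheory.volume.restrict (Set.Ioo 0 T)),
        ∀ z ∈ Z, ⟪z - u t + y₁ t, v₁ t⟫ ≤ 0)
    (h2var : ∀ᵐ t ∂(MeasureTheory.volume.restrict (Set.Ioo 0 T)),
        ∀ z ∈ Z, ⟪z - u t + y₂ t, v₂ t⟫ ≤ 0)
    (h1ic : u 0 - y₁ 0 = z0) (h2ic : u 0 - y₂ 0 = z0) :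
    Set.EqOn y₁ y₂ (Set.Icc 0 T) :=
  stmt_11_general Z T z0 u y₁ y₂ v₁ v₂ h1int h2int h1 h2 h1mem h2mem h1var h2var h1ic h2ic
end

section
/- Let H be a real Hilbert space, Z ⊆ H nonempty closed convex, z₀ ∈ Z, u ∈ W^{1,1}(0,T;H), and let y ∈ W^{1,1}(0,T;H) be the solution of the play problem: u(t) - y(t) ∈ Z for all t, ⟨z - u(t) + y(t), y'(t)⟩ ≤ 0 for all z ∈ Z and a.e. t, u(0) - y(0) = z₀. Set x := u - y. Then ⟨x'(t), y'(t)⟩ = 0 for a.e. t ∈ [0,T]; consequently ‖2y'(t) - u'(t)‖ = ‖u'(t)‖ for a.e. t ∈ [0,T]. -/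
open Set Filter Topology MeasureTheory
open scoped RealInnerProductSpace

/-! At a.e. `t` the function `x = u - y` is differentiable with derivative `u' t - y' t`
(Lebesgue differentiation). Since `x` stays in `Z` and `y' t` lies in the normal cone of `Z` at
`x t`, the map `s ↦ ⟪x s, y' t⟫` has a local maximum at `t`, so by Fermat's rule
`⟪x' t, y' t⟫ = 0`. The norm identity is Pythagoras: `2 y' - u'` and `u'` are `y' ∓ x'`. -/

theorem ae_hasDerivAt_of_eq_add_integral_s12 {E : Type*} [NormedAddCommGroup E] [NormedSpace ℝ E]
    [CompleteSpace E] {f f' : ℝ → E} {a b : ℝ} (hf' : IntervalIntegrable f' volume a b)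
    (hf : ∀ t ∈ Icc a b, f t = f a + ∫ s in a..t, f' s) :
    ∀ᵐ t ∂volume.restrict (Ioo a b), HasDerivAt f (f' t) t := by
  rw [ae_restrict_iff' measurableSet_Ioo]
  filter_upwards [hf'.ae_hasDerivAt_integral] with t ht htab
  have hderiv := (ht (Icc_subset_uIcc (Ioo_subset_Icc_self htab)) a left_mem_uIcc).const_add (f a)
  refine hderiv.congr_of_eventuallyEq ?_
  filter_upwards [Ioo_mem_nhds htab.1 htab.2] with s hs using hf s (Ioo_subset_Icc_self hs)

theorem HasDerivAt.inner_eq_zero_of_normal {E : Type*} [NormedAddCommGroup E]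
    [InnerProductSpace ℝ E] {Z : Set E} {x : ℝ → E} {v c : E} {t : ℝ} (hx : HasDerivAt x v t)
    (hxZ : ∀ᶠ s in 𝓝 t, x s ∈ Z) (hc : ∀ z ∈ Z, ⟪z - x t, c⟫ ≤ 0) : ⟪v, c⟫ = 0 := by
  have hmax : IsLocalMax (fun s => ⟪x s, c⟫) t := by
    filter_upwards [hxZ] with s hs
    simpa [inner_sub_left] using hc (x s) hs
  exact hmax.hasDerivAt_eq_zero (by simpa using hx.inner ℝ (hasDerivAt_const t c))

theorem norm_two_smul_sub_eq_norm_of_inner_sub_eq_zero {E : Type*} [NormedAddCommGroup E]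
    [InnerProductSpace ℝ E] {a b : E} (h : ⟪a - b, b⟫ = 0) : ‖(2 : ℝ) • b - a‖ = ‖a‖ := by
  have hpyth := norm_sub_eq_norm_add h
  rwa [sub_sub_eq_add_sub, ← two_smul ℝ, add_sub_cancel] at hpyth

theorem stmt_12_general {H : Type*} [NormedAddCommGroup H] [InnerProductSpace ℝ H] [CompleteSpace H]
    (Z : Set H)
    (T : ℝ)
    (u u' : ℝ → H)
    (huint : IntervalIntegrable u' MeasureTheory.volume 0 T)
    (hu : ∀ t ∈ Set.Icc 0 T, u t = u 0 + ∫ s in (0:ℝ)..t, u' s)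
    (y y' : ℝ → H)
    (hyint : IntervalIntegrable y' MeasureTheory.volume 0 T)
    (hy : ∀ t ∈ Set.Icc 0 T, y t = y 0 + ∫ s in (0:ℝ)..t, y' s)
    (hmem : ∀ t ∈ Set.Icc 0 T, u t - y t ∈ Z)
    (hvar : ∀ᵐ t ∂(MeasureTheory.volume.restrict (Set.Ioo 0 T)),
        ∀ z ∈ Z, ⟪z - u t + y t, y' t⟫ ≤ 0) :
    ∀ᵐ t ∂(MeasureTheory.volume.restrict (Set.Ioo 0 T)),
      ⟪u' t - y' t, y' t⟫ = 0 ∧ ‖(2:ℝ) • y' t - u' t‖ = ‖u' t‖ := by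
  filter_upwards [ae_hasDerivAt_of_eq_add_integral_s12 huint hu,
    ae_hasDerivAt_of_eq_add_integral_s12 hyint hy, hvar, ae_restrict_mem measurableSet_Ioo]
    with t hut hyt hvt ht
  have hxZ : ∀ᶠ s in 𝓝 t, u s - y s ∈ Z := by
    filter_upwards [Ioo_mem_nhds ht.1 ht.2] with s hs using hmem s (Ioo_subset_Icc_self hs)
  have horth : ⟪u' t - y' t, y' t⟫ = 0 :=
    (hut.sub hyt).inner_eq_zero_of_normal hxZ fun z hz => by simpa [sub_add] using hvt z hz
  exact ⟨horth, norm_two_smul_sub_eq_norm_of_inner_sub_eq_zero horth⟩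

/-- For the solution `y` of the play problem with `W^{1,1}` input `u`, setting `x = u - y`
one has the a.e. orthogonality `⟪x'(t), y'(t)⟫ = 0`; consequently
`‖2y'(t) - u'(t)‖ = ‖u'(t)‖` a.e. on `[0,T]`. -/
theorem stmt_12 {H : Type*} [NormedAddCommGroup H] [InnerProductSpace ℝ H] [CompleteSpace H]
    (Z : Set H) (hZne : Z.Nonempty) (hZcl : IsClosed Z) (hZcv : Convex ℝ Z)
    (T : ℝ) (hT : 0 < T) (z0 : H) (hz0 : z0 ∈ Z)
    (u u' : ℝ → H)
    (huint : IntervalIntegrable u' MeasureTheory.volume 0 T)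
    (hu : ∀ t ∈ Set.Icc 0 T, u t = u 0 + ∫ s in (0:ℝ)..t, u' s)
    (y y' : ℝ → H)
    (hyint : IntervalIntegrable y' MeasureTheory.volume 0 T)
    (hy : ∀ t ∈ Set.Icc 0 T, y t = y 0 + ∫ s in (0:ℝ)..t, y' s)
    (hmem : ∀ t ∈ Set.Icc 0 T, u t - y t ∈ Z)
    (hvar : ∀ᵐ t ∂(MeasureTheory.volume.restrict (Set.Ioo 0 T)),
        ∀ z ∈ Z, ⟪z - u t + y t, y' t⟫ ≤ 0)
    (hic : u 0 - y 0 = z0) :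
    ∀ᵐ t ∂(MeasureTheory.volume.restrict (Set.Ioo 0 T)),
      ⟪u' t - y' t, y' t⟫ = 0 ∧ ‖(2:ℝ) • y' t - u' t‖ = ‖u' t‖ :=
  stmt_12_general Z T u u' huint hu y y' hyint hy hmem hvar
end

section
/- Let H be a real Hilbert space, I ⊆ ℝ an interval, w_n, w : I → H functions of bounded variation, and μ : B(I) → H a vector measure of bounded variation. If w_n → w uniformly on I and the measures Dw_n converge weakly to μ (in the sense that Λ(Dw_n) → Λ(μ) for every bounded linear functional Λ on the Banach space of H-valued measures of bounded variation with the total variation norm), then μ = Dw. -/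
open Set Filter Topology MeasureTheory ENNReal
open scoped Classical NNReal

/-- Left limit of `f` at `t` along the set `I`, with the convention that it equals `f t`
when there are no points of `I` below `t`. -/
noncomputable def olimL {H : Type*} [TopologicalSpace H] [Nonempty H]
    (f : ℝ → H) (I : Set ℝ) (t : ℝ) : H :=
  if (I ∩ Set.Iio t).Nonempty then limUnder (nhdsWithin t (I ∩ Set.Iio t)) f else f t

/-- Right limit of `f` at `t` along the set `I`, with the convention that it equals `f t`
when there are no points of `I` above `t`. -/
noncomputable def olimR {H : Type*} [TopologicalSpace H] [Nonempty H]
    (f : ℝ → H) (I : Set ℝ) (t : ℝ) : H :=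
  if (I ∩ Set.Ioi t).Nonempty then limUnder (nhdsWithin t (I ∩ Set.Ioi t)) f else f t

/-- Total variation (in `ℝ≥0∞`) of a vector measure: the supremum of `Σ ‖σ(Bᵢ)‖` over
finite disjoint families of Borel sets. -/
noncomputable def vmEVar {H : Type*} [NormedAddCommGroup H]
    (σ : MeasureTheory.VectorMeasure ℝ H) : ℝ≥0∞ :=
  ⨆ (n : ℕ) (B : Fin n → Set ℝ) (_ : ∀ i, MeasurableSet (B i))
    (_ : Pairwise fun i j => Disjoint (B i) (B j)), ∑ i, (‖σ (B i)‖₊ : ℝ≥0∞)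

/-- `σ` is the Lebesgue–Stieltjes (differential) measure `Df` of a `BV` function
`f : I → H`: it is concentrated on `I` and takes the canonical values, expressed through
one-sided limits of `f`, on all subintervals of `I`. -/
def IsDiffMeasure {H : Type*} [NormedAddCommGroup H]
    (I : Set ℝ) (f : ℝ → H) (μ : MeasureTheory.VectorMeasure ℝ H) : Prop :=
  (∀ B : Set ℝ, MeasurableSet B → B ∩ I = ∅ → μ B = 0) ∧
  (∀ c d : ℝ, c < d → Set.Ioo c d ⊆ I → μ (Set.Ioo c d) = olimL f I d - olimR f I c) ∧
  (∀ c d : ℝ, c < d → Set.Icc c d ⊆ I → μ (Set.Icc c d) = olimR f I d - olimL f I c) ∧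
  (∀ c d : ℝ, c < d → Set.Ico c d ⊆ I → μ (Set.Ico c d) = olimL f I d - olimL f I c) ∧
  (∀ c d : ℝ, c < d → Set.Ioc c d ⊆ I → μ (Set.Ioc c d) = olimR f I d - olimR f I c)


/-!
Testing against the bounded functionals `τ ↦ ⟪x, τ B⟫` identifies `μ B` with the norm limit of
`σ n B` whenever that limit exists, so it suffices that `σ n B → Dw(B)` for the sets occurring in
`IsDiffMeasure`. There `σ n B` is a difference of one-sided limits of `wn n`, which exist because
`wn n` has bounded variation; by uniform convergence these limits converge, and their limits are
the one-sided limits of `w`.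
-/

section UniformLimits

variable {ι α E : Type*} [Nonempty ι] [SemilatticeSup ι] [MetricSpace E]
  {F : ι → α → E} {f : α → E} {s : Set α} {l : Filter α} {a : ι → E}

theorem TendstoUniformlyOn.cauchySeq_of_tendsto [l.NeBot]
    (hF : TendstoUniformlyOn F f atTop s) (hs : s ∈ l) (ha : ∀ i, Tendsto (F i) l (𝓝 (a i))) :
    CauchySeq a := by
  refine Metric.cauchySeq_iff.2 fun ε hε => ?_
  obtain ⟨N, hN⟩ := Metric.uniformCauchySeqOn_iff.1 hF.uniformCauchySeqOn (ε / 2) (half_pos hε)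
  refine ⟨N, fun m hm n hn => ?_⟩
  have hclose : ∀ᶠ x in l, dist (F m x) (F n x) ≤ ε / 2 :=
    Filter.mem_of_superset hs fun x hx => (hN m hm n hn x hx).le
  calc dist (a m) (a n) ≤ ε / 2 := le_of_tendsto ((ha m).dist (ha n)) hclose
    _ < ε := half_lt_self hε

theorem TendstoUniformlyOn.exists_tendsto_of_tendsto [CompleteSpace E] [l.NeBot]
    (hF : TendstoUniformlyOn F f atTop s) (hs : s ∈ l) (ha : ∀ i, Tendsto (F i) l (𝓝 (a i))) :
    ∃ b, Tendsto a atTop (𝓝 b) ∧ Tendsto f l (𝓝 b) := by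
  obtain ⟨b, hb⟩ := cauchySeq_tendsto_of_complete (hF.cauchySeq_of_tendsto hs ha)
  have hFl : TendstoUniformlyOnFilter F f atTop l :=
    hF.tendstoUniformlyOnFilter.mono_right (le_principal_iff.2 hs)
  exact ⟨b, hb, hFl.tendsto_of_eventually_tendsto (Eventually.of_forall ha) hb⟩

end UniformLimits

section OneSidedLimits

variable {I : Set ℝ} {t : ℝ}

theorem neBot_nhdsWithin_inter_Iio {c : ℝ} (hct : c < t) (hI : Ioo c t ⊆ I) :
    (𝓝[I ∩ Iio t] t).NeBot :=
  (right_nhdsWithin_Ioo_neBot hct).mono (nhdsWithin_mono t fun _ hz => ⟨hI hz, hz.2⟩)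

theorem neBot_nhdsWithin_inter_Ioi {d : ℝ} (htd : t < d) (hI : Ioo t d ⊆ I) :
    (𝓝[I ∩ Ioi t] t).NeBot :=
  (left_nhdsWithin_Ioo_neBot htd).mono (nhdsWithin_mono t fun _ hz => ⟨hI hz, hz.1⟩)

theorem olimL_eq_of_tendsto {H : Type*} [TopologicalSpace H] [T2Space H] [Nonempty H]
    {f : ℝ → H} {a : H} [(𝓝[I ∩ Iio t] t).NeBot]
    (hf : Tendsto f (𝓝[I ∩ Iio t] t) (𝓝 a)) : olimL f I t = a := by
  rw [olimL, if_pos (Filter.nonempty_of_mem (self_mem_nhdsWithin (a := t)))]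
  exact hf.limUnder_eq

theorem olimR_eq_of_tendsto {H : Type*} [TopologicalSpace H] [T2Space H] [Nonempty H]
    {f : ℝ → H} {a : H} [(𝓝[I ∩ Ioi t] t).NeBot]
    (hf : Tendsto f (𝓝[I ∩ Ioi t] t) (𝓝 a)) : olimR f I t = a := by
  rw [olimR, if_pos (Filter.nonempty_of_mem (self_mem_nhdsWithin (a := t)))]
  exact hf.limUnder_eq

variable {H : Type*} [MetricSpace H] [CompleteSpace H] [Nonempty H] {w : ℝ → H} {wn : ℕ → ℝ → H}

theorem tendsto_olimL_of_neBot (hwn : ∀ n, BoundedVariationOn (wn n) I)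
    (hunif : TendstoUniformlyOn wn w atTop I) [(𝓝[I ∩ Iio t] t).NeBot] :
    Tendsto (fun n => olimL (wn n) I t) atTop (𝓝 (olimL w I t)) := by
  choose a ha using fun n => (hwn n).exists_tendsto_left t
  obtain ⟨b, hab, hb⟩ :=
    hunif.exists_tendsto_of_tendsto (mem_of_superset self_mem_nhdsWithin inter_subset_left) ha
  simpa only [olimL_eq_of_tendsto (ha _), olimL_eq_of_tendsto hb] using hab

theorem tendsto_olimR_of_neBot (hwn : ∀ n, BoundedVariationOn (wn n) I)
    (hunif : TendstoUniformlyOn wn w atTop I) [(𝓝[I ∩ Ioi t] t).NeBot] :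
    Tendsto (fun n => olimR (wn n) I t) atTop (𝓝 (olimR w I t)) := by
  choose a ha using fun n => (hwn n).exists_tendsto_right t
  obtain ⟨b, hab, hb⟩ :=
    hunif.exists_tendsto_of_tendsto (mem_of_superset self_mem_nhdsWithin inter_subset_left) ha
  simpa only [olimR_eq_of_tendsto (ha _), olimR_eq_of_tendsto hb] using hab

theorem tendsto_olimL_of_mem (hI : I.OrdConnected) (ht : t ∈ I)
    (hwn : ∀ n, BoundedVariationOn (wn n) I) (hunif : TendstoUniformlyOn wn w atTop I) :
    Tendsto (fun n => olimL (wn n) I t) atTop (𝓝 (olimL w I t)) := by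
  by_cases hne : (I ∩ Iio t).Nonempty
  · obtain ⟨c, hc, hct⟩ := hne
    have := neBot_nhdsWithin_inter_Iio hct (Ioo_subset_Icc_self.trans (hI.out hc ht))
    exact tendsto_olimL_of_neBot hwn hunif
  · simpa only [olimL, if_neg hne] using hunif.tendsto_at ht

theorem tendsto_olimR_of_mem (hI : I.OrdConnected) (ht : t ∈ I)
    (hwn : ∀ n, BoundedVariationOn (wn n) I) (hunif : TendstoUniformlyOn wn w atTop I) :
    Tendsto (fun n => olimR (wn n) I t) atTop (𝓝 (olimR w I t)) := by
  by_cases hne : (I ∩ Ioi t).Nonempty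
  · obtain ⟨d, hd, htd⟩ := hne
    have := neBot_nhdsWithin_inter_Ioi htd (Ioo_subset_Icc_self.trans (hI.out ht hd))
    exact tendsto_olimR_of_neBot hwn hunif
  · simpa only [olimR, if_neg hne] using hunif.tendsto_at ht

end OneSidedLimits

namespace MeasureTheory.VectorMeasure

variable {H : Type*} [NormedAddCommGroup H]

theorem nnnorm_apply_le_vmEVar (τ : VectorMeasure ℝ H) {B : Set ℝ} (hB : MeasurableSet B) :
    (‖τ B‖₊ : ℝ≥0∞) ≤ vmEVar τ := by
  have hsingle : (‖τ B‖₊ : ℝ≥0∞) = ∑ _ : Fin 1, (‖τ B‖₊ : ℝ≥0∞) := by simp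
  rw [hsingle, vmEVar]
  exact le_iSup_of_le 1 <| le_iSup_of_le (fun _ => B) <| le_iSup_of_le (fun _ => hB) <|
    le_iSup_of_le (fun i j hij => (hij (Subsingleton.elim i j)).elim) le_rfl

abbrev TendstoWeakly [NormedSpace ℝ H] {ι : Type*} (σ : ι → VectorMeasure ℝ H) (p : Filter ι)
    (μ : VectorMeasure ℝ H) : Prop :=
  ∀ Λ : VectorMeasure ℝ H →ₗ[ℝ] ℝ, (∃ C : ℝ≥0∞, ∀ τ, (‖Λ τ‖₊ : ℝ≥0∞) ≤ C * vmEVar τ) →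
    Tendsto (fun i => Λ (σ i)) p (𝓝 (Λ μ))

variable [InnerProductSpace ℝ H]

def innerApplyₗ {α : Type*} [MeasurableSpace α] (x : H) (B : Set α) :
    VectorMeasure α H →ₗ[ℝ] ℝ where
  toFun τ := inner ℝ x (τ B)
  map_add' τ₁ τ₂ := by simp only [add_apply, inner_add_right]
  map_smul' c τ := by simp only [smul_apply, real_inner_smul_right, RingHom.id_apply, smul_eq_mul]

theorem nnnorm_innerApplyₗ_le (x : H) {B : Set ℝ} (hB : MeasurableSet B) (τ : VectorMeasure ℝ H) :
    (‖innerApplyₗ x B τ‖₊ : ℝ≥0∞) ≤ ‖x‖₊ * vmEVar τ :=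
  calc (‖innerApplyₗ x B τ‖₊ : ℝ≥0∞) ≤ ‖x‖₊ * ‖τ B‖₊ := by
        exact_mod_cast nnnorm_inner_le_nnnorm (𝕜 := ℝ) x (τ B)
    _ ≤ ‖x‖₊ * vmEVar τ := mul_le_mul_right (nnnorm_apply_le_vmEVar τ hB) _

theorem TendstoWeakly.apply_eq_of_tendsto {ι : Type*} {σ : ι → VectorMeasure ℝ H}
    {p : Filter ι} [p.NeBot] {μ : VectorMeasure ℝ H} (hσ : TendstoWeakly σ p μ)
    {B : Set ℝ} (hB : MeasurableSet B) {b : H} (hσB : Tendsto (fun i => σ i B) p (𝓝 b)) :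
    μ B = b :=
  ext_inner_left ℝ fun x => tendsto_nhds_unique
    (hσ (innerApplyₗ x B) ⟨_, nnnorm_innerApplyₗ_le x hB⟩) (tendsto_const_nhds.inner hσB)

end MeasureTheory.VectorMeasure

theorem stmt_17_general {H : Type*} [NormedAddCommGroup H] [InnerProductSpace ℝ H] [CompleteSpace H]
    (I : Set ℝ) (hI : I.OrdConnected)
    (w : ℝ → H) (wn : ℕ → ℝ → H)
    (hwn : ∀ n, BoundedVariationOn (wn n) I)
    (σ : ℕ → MeasureTheory.VectorMeasure ℝ H)
    (hσ : ∀ n, IsDiffMeasure I (wn n) (σ n))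
    (μ : MeasureTheory.VectorMeasure ℝ H)
    (hunif : TendstoUniformlyOn wn w atTop I)
    (hweak : ∀ Λ : MeasureTheory.VectorMeasure ℝ H →ₗ[ℝ] ℝ,
        (∃ C : ℝ≥0∞, ∀ τ : MeasureTheory.VectorMeasure ℝ H,
          (‖Λ τ‖₊ : ℝ≥0∞) ≤ C * vmEVar τ) →
        Filter.Tendsto (fun n => Λ (σ n)) atTop (𝓝 (Λ μ))) :
    IsDiffMeasure I w μ := by
  have hμ : VectorMeasure.TendstoWeakly σ atTop μ := hweak
  refine ⟨fun B hB hBI => ?_, fun c d hcd hsub => ?_, fun c d hcd hsub => ?_,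
    fun c d hcd hsub => ?_, fun c d hcd hsub => ?_⟩
  · exact hμ.apply_eq_of_tendsto hB (tendsto_const_nhds.congr fun n => ((hσ n).1 B hB hBI).symm)
  · have := neBot_nhdsWithin_inter_Iio hcd hsub
    have := neBot_nhdsWithin_inter_Ioi hcd hsub
    refine hμ.apply_eq_of_tendsto measurableSet_Ioo
      (Tendsto.congr (fun n => ((hσ n).2.1 c d hcd hsub).symm) ?_)
    exact (tendsto_olimL_of_neBot hwn hunif).sub (tendsto_olimR_of_neBot hwn hunif)
  · refine hμ.apply_eq_of_tendsto measurableSet_Icc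
      (Tendsto.congr (fun n => ((hσ n).2.2.1 c d hcd hsub).symm) ?_)
    exact (tendsto_olimR_of_mem hI (hsub (right_mem_Icc.2 hcd.le)) hwn hunif).sub
      (tendsto_olimL_of_mem hI (hsub (left_mem_Icc.2 hcd.le)) hwn hunif)
  · have := neBot_nhdsWithin_inter_Iio hcd (Ioo_subset_Ico_self.trans hsub)
    refine hμ.apply_eq_of_tendsto measurableSet_Ico
      (Tendsto.congr (fun n => ((hσ n).2.2.2.1 c d hcd hsub).symm) ?_)
    exact (tendsto_olimL_of_neBot hwn hunif).sub
      (tendsto_olimL_of_mem hI (hsub (left_mem_Ico.2 hcd)) hwn hunif)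
  · have := neBot_nhdsWithin_inter_Ioi hcd (Ioo_subset_Ioc_self.trans hsub)
    refine hμ.apply_eq_of_tendsto measurableSet_Ioc
      (Tendsto.congr (fun n => ((hσ n).2.2.2.2 c d hcd hsub).symm) ?_)
    exact (tendsto_olimR_of_mem hI (hsub (right_mem_Ioc.2 hcd)) hwn hunif).sub
      (tendsto_olimR_of_neBot hwn hunif)

/-- If `w_n → w` uniformly on the interval `I`, all of bounded variation, and the
differential measures `Dw_n` converge weakly (tested against all bounded linear
functionals for the total variation norm) to a vector measure `μ` of bounded variation,
then `μ = Dw`. -/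
theorem stmt_17 {H : Type*} [NormedAddCommGroup H] [InnerProductSpace ℝ H] [CompleteSpace H]
    (I : Set ℝ) (hI : I.OrdConnected) (hIne : I.Nonempty)
    (w : ℝ → H) (wn : ℕ → ℝ → H)
    (hw : BoundedVariationOn w I) (hwn : ∀ n, BoundedVariationOn (wn n) I)
    (σ : ℕ → MeasureTheory.VectorMeasure ℝ H)
    (hσ : ∀ n, IsDiffMeasure I (wn n) (σ n))
    (hσbv : ∀ n, vmEVar (σ n) ≠ ⊤)
    (μ : MeasureTheory.VectorMeasure ℝ H)
    (hμbv : vmEVar μ ≠ ⊤)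
    (hunif : TendstoUniformlyOn wn w atTop I)
    (hweak : ∀ Λ : MeasureTheory.VectorMeasure ℝ H →ₗ[ℝ] ℝ,
        (∃ C : ℝ≥0∞, ∀ τ : MeasureTheory.VectorMeasure ℝ H,
          (‖Λ τ‖₊ : ℝ≥0∞) ≤ C * vmEVar τ) →
        Filter.Tendsto (fun n => Λ (σ n)) atTop (𝓝 (Λ μ))) :
    IsDiffMeasure I w μ :=
  stmt_17_general I hI w wn hwn σ hσ μ hunif hweak
end

section
/- Let H be a real Hilbert space, T > 0, and u, u_n : [0,T] → H right-continuous of bounded variation for all n ∈ ℕ, with ‖u_n - u‖_∞ + V(u_n - u, [0,T]) → 0 as n → ∞. Define ℓ(t) := (T/V(u,[0,T]))·V(u,[0,t]) and ℓ_n(t) := (T/V(u_n,[0,T]))·V(u_n,[0,t]) (assuming V(u,[0,T]) > 0, and hence V(u_n,[0,T]) > 0 for n large). Then V(ℓ_n - ℓ, [0,T]) → 0 as n → ∞. -/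
open Set Filter Topology MeasureTheory ENNReal

/-!
For `a ≤ b`, the triangle inequality for the variation gives
`|V(uₙ,[a,b]) - V(u,[a,b])| ≤ V(uₙ - u,[a,b])`; summing over a partition of `[0,T]` shows that
`t ↦ V(uₙ,[0,t]) - V(u,[0,t])` has variation at most `V(uₙ - u,[0,T]) → 0`. In particular
`V(uₙ,[0,T]) → V(u,[0,T]) > 0`, so the normalising constants `cₙ = T / V(uₙ,[0,T])` converge to
`c = T / V(u,[0,T])`, and the variation of
`ℓₙ - ℓ = cₙ (V(uₙ,[0,·]) - V(u,[0,·])) + (cₙ - c) V(u,[0,·])` is at most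
`|cₙ| V(uₙ - u,[0,T]) + |cₙ - c| V(u,[0,T]) → 0`.
-/

section Variation

variable {α : Type*} [LinearOrder α]

theorem eVariationOn_le_of_edist_le {E F : Type*} [PseudoEMetricSpace E] [PseudoEMetricSpace F]
    {φ : α → F} {g : α → E} {s : Set α}
    (h : ∀ x ∈ s, ∀ y ∈ s, x ≤ y → edist (φ y) (φ x) ≤ eVariationOn g (s ∩ Icc x y)) :
    eVariationOn φ s ≤ eVariationOn g s := by
  refine iSup_le fun ⟨n, p, hp, ps⟩ => ?_
  calc ∑ i ∈ Finset.range n, edist (φ (p (i + 1))) (φ (p i))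
      ≤ ∑ i ∈ Finset.range n, eVariationOn g (s ∩ Icc (p i) (p (i + 1))) :=
        Finset.sum_le_sum fun i _ => h _ (ps i) _ (ps (i + 1)) (hp i.le_succ)
    _ = eVariationOn g (s ∩ Icc (p 0) (p n)) := eVariationOn.sum g hp fun i _ _ => ps i
    _ ≤ eVariationOn g s := eVariationOn.mono g inter_subset_left

theorem eVariationOn_const {E : Type*} [PseudoEMetricSpace E] (c : E) (s : Set α) :
    eVariationOn (fun _ => c) s = 0 :=
  eVariationOn.constant_on (subsingleton_singleton.anti (image_subset_iff.2 fun _ _ => rfl))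

variable {E : Type*} [SeminormedAddCommGroup E]

theorem eVariationOn_add_le (f g : α → E) (s : Set α) :
    eVariationOn (fun x => f x + g x) s ≤ eVariationOn f s + eVariationOn g s := by
  refine iSup_le fun ⟨n, p, hp, ps⟩ => ?_
  calc ∑ i ∈ Finset.range n, edist (f (p (i + 1)) + g (p (i + 1))) (f (p i) + g (p i))
      ≤ ∑ i ∈ Finset.range n,
          (edist (f (p (i + 1))) (f (p i)) + edist (g (p (i + 1))) (g (p i))) :=
        Finset.sum_le_sum fun i _ => edist_add_add_le _ _ _ _
    _ ≤ eVariationOn f s + eVariationOn g s := by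
        rw [Finset.sum_add_distrib]
        exact add_le_add (eVariationOn.sum_le hp ps) (eVariationOn.sum_le hp ps)

theorem eVariationOn_neg (f : α → E) (s : Set α) :
    eVariationOn (fun x => -f x) s = eVariationOn f s := by
  simp only [eVariationOn, edist_neg_neg]

theorem eVariationOn_sub_comm (f g : α → E) (s : Set α) :
    eVariationOn (fun x => f x - g x) s = eVariationOn (fun x => g x - f x) s := by
  simpa only [neg_sub] using eVariationOn_neg (fun x => g x - f x) s

theorem eVariationOn_le_add_eVariationOn_sub (f g : α → E) (s : Set α) :
    eVariationOn f s ≤ eVariationOn g s + eVariationOn (fun x => f x - g x) s := by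
  simpa using eVariationOn_add_le g (fun x => f x - g x) s

theorem eVariationOn_const_smul_le {𝕜 : Type*} [NormedField 𝕜] [NormedSpace 𝕜 E]
    (c : 𝕜) (f : α → E) (s : Set α) :
    eVariationOn (fun x => c • f x) s ≤ ‖c‖ₑ * eVariationOn f s :=
  (lipschitzWith_smul c).lipschitzOnWith.comp_eVariationOn_le (mapsTo_univ f s)

theorem edist_toReal_eVariationOn_le {f g : α → E} {s : Set α}
    (hf : BoundedVariationOn f s) (hg : BoundedVariationOn g s) :
    edist (eVariationOn f s).toReal (eVariationOn g s).toReal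
      ≤ eVariationOn (fun x => f x - g x) s := by
  have hfg : eVariationOn (fun x => f x - g x) s ≠ ∞ :=
    ne_top_of_le_ne_top (add_ne_top.2 ⟨hf, hg⟩) <| by
      simpa only [sub_eq_add_neg, eVariationOn_neg] using eVariationOn_add_le f (fun x => -g x) s
  rw [edist_dist, ENNReal.ofReal_le_iff_le_toReal hfg, Real.dist_eq, abs_sub_le_iff,
    sub_le_iff_le_add', sub_le_iff_le_add', ← toReal_add hg hfg, ← toReal_add hf hfg]
  refine ⟨toReal_mono (add_ne_top.2 ⟨hg, hfg⟩) (eVariationOn_le_add_eVariationOn_sub f g s),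
    toReal_mono (add_ne_top.2 ⟨hf, hfg⟩) ?_⟩
  rw [eVariationOn_sub_comm]
  exact eVariationOn_le_add_eVariationOn_sub g f s

theorem BoundedVariationOn.toReal_eVariationOn_Icc_sub {f : α → E} {a b c : α}
    (hf : BoundedVariationOn f (Icc a c)) (hab : a ≤ b) (hbc : b ≤ c) :
    (eVariationOn f (Icc a c)).toReal - (eVariationOn f (Icc a b)).toReal
      = (eVariationOn f (Icc b c)).toReal := by
  have hsplit := eVariationOn.Icc_add_Icc f (s := univ) hab hbc (mem_univ b)
  simp only [univ_inter] at hsplit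
  rw [← hsplit, toReal_add, add_sub_cancel_left]
  · exact ne_top_of_le_ne_top hf (eVariationOn.mono f (Icc_subset_Icc le_rfl hbc))
  · exact ne_top_of_le_ne_top hf (eVariationOn.mono f (Icc_subset_Icc hab le_rfl))

theorem eVariationOn_toReal_eVariationOn_sub_le {f g : α → E} {a b : α}
    (hf : BoundedVariationOn f (Icc a b)) (hg : BoundedVariationOn g (Icc a b)) :
    eVariationOn (fun t => (eVariationOn f (Icc a t)).toReal
        - (eVariationOn g (Icc a t)).toReal) (Icc a b)
      ≤ eVariationOn (fun t => f t - g t) (Icc a b) := by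
  refine eVariationOn_le_of_edist_le fun x hx y hy hxy => ?_
  have hsub : Icc a y ⊆ Icc a b := Icc_subset_Icc le_rfl hy.2
  have hfy := hf.mono hsub
  have hgy := hg.mono hsub
  have hincr : ((eVariationOn f (Icc a y)).toReal - (eVariationOn g (Icc a y)).toReal)
      - ((eVariationOn f (Icc a x)).toReal - (eVariationOn g (Icc a x)).toReal)
      = (eVariationOn f (Icc x y)).toReal - (eVariationOn g (Icc x y)).toReal := by
    rw [← hfy.toReal_eVariationOn_Icc_sub hx.1 hxy, ← hgy.toReal_eVariationOn_Icc_sub hx.1 hxy]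
    ring
  rw [edist_dist, Real.dist_eq, hincr, ← Real.dist_eq, ← edist_dist,
    inter_eq_right.2 (Icc_subset_Icc hx.1 hy.2)]
  exact edist_toReal_eVariationOn_le (hfy.mono (Icc_subset_Icc hx.1 le_rfl))
    (hgy.mono (Icc_subset_Icc hx.1 le_rfl))

theorem eVariationOn_toReal_eVariationOn_le {f : α → E} {a b : α}
    (hf : BoundedVariationOn f (Icc a b)) :
    eVariationOn (fun t => (eVariationOn f (Icc a t)).toReal) (Icc a b)
      ≤ eVariationOn f (Icc a b) := by
  simpa [eVariationOn_const] using eVariationOn_toReal_eVariationOn_sub_le hf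
    (g := fun _ => 0) (by simp [BoundedVariationOn, eVariationOn_const])

end Variation

theorem stmt_19_general {H : Type*} [NormedAddCommGroup H]
    (T : ℝ)
    (u : ℝ → H) (un : ℕ → ℝ → H)
    (hvar : Filter.Tendsto (fun n => eVariationOn (fun t => un n t - u t) (Set.Icc 0 T))
        atTop (𝓝 0))
    (hVpos : 0 < (eVariationOn u (Set.Icc 0 T)).toReal)
    (ℓ : ℝ → ℝ)
    (hℓ : ∀ t, ℓ t = (T / (eVariationOn u (Set.Icc 0 T)).toReal)
        * (eVariationOn u (Set.Icc 0 t)).toReal)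
    (ℓn : ℕ → ℝ → ℝ)
    (hℓn : ∀ n t, ℓn n t = (T / (eVariationOn (un n) (Set.Icc 0 T)).toReal)
        * (eVariationOn (un n) (Set.Icc 0 t)).toReal) :
    Filter.Tendsto (fun n => eVariationOn (fun t => ℓn n t - ℓ t) (Set.Icc 0 T))
      atTop (𝓝 0) := by
  set V := eVariationOn u (Icc 0 T)
  set W := fun n => eVariationOn (fun t => un n t - u t) (Icc 0 T)
  set c := T / V.toReal
  set cn := fun n => T / (eVariationOn (un n) (Icc 0 T)).toReal
  have hbv : BoundedVariationOn u (Icc 0 T) := (toReal_pos_iff.1 hVpos).2.ne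
  have hbvn : ∀ᶠ n in atTop, BoundedVariationOn (un n) (Icc 0 T) :=
    (hvar.eventually (gt_mem_nhds zero_lt_top)).mono fun n hn =>
      ne_top_of_le_ne_top (add_ne_top.2 ⟨hbv, hn.ne⟩)
        (eVariationOn_le_add_eVariationOn_sub (un n) u _)
  have hcn : Tendsto cn atTop (𝓝 c) := by
    refine tendsto_const_nhds.div ?_ hVpos.ne'
    refine tendsto_iff_edist_tendsto_0.2 (tendsto_of_tendsto_of_tendsto_of_le_of_le'
      tendsto_const_nhds hvar (Eventually.of_forall fun _ => zero_le) ?_)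
    exact hbvn.mono fun n hn => edist_toReal_eVariationOn_le hn hbv
  have hbound : ∀ᶠ n in atTop, eVariationOn (fun t => ℓn n t - ℓ t) (Icc 0 T)
      ≤ ‖cn n‖ₑ * W n + ‖cn n - c‖ₑ * V := by
    refine hbvn.mono fun n hn => ?_
    have hsplit : (fun t => ℓn n t - ℓ t) = fun t =>
        cn n • ((eVariationOn (un n) (Icc 0 t)).toReal - (eVariationOn u (Icc 0 t)).toReal)
          + (cn n - c) • (eVariationOn u (Icc 0 t)).toReal := by
      funext t
      simp only [hℓn, hℓ, smul_eq_mul, cn, c, V]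
      ring
    rw [hsplit]
    refine (eVariationOn_add_le _ _ _).trans (add_le_add ?_ ?_)
    · exact (eVariationOn_const_smul_le _ _ _).trans
        (mul_le_mul_right (eVariationOn_toReal_eVariationOn_sub_le hn hbv) _)
    · exact (eVariationOn_const_smul_le _ _ _).trans
        (mul_le_mul_right (eVariationOn_toReal_eVariationOn_le hbv) _)
  have hlim : Tendsto (fun n => ‖cn n‖ₑ * W n + ‖cn n - c‖ₑ * V) atTop (𝓝 0) := by
    have hA := ENNReal.Tendsto.mul hcn.enorm (Or.inr zero_ne_top) hvar (Or.inr enorm_ne_top)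
    have hB := ENNReal.Tendsto.mul_const (hcn.sub_const c).enorm (Or.inr hbv)
    simpa using hA.add hB
  exact tendsto_of_tendsto_of_tendsto_of_le_of_le' tendsto_const_nhds hlim
    (Eventually.of_forall fun _ => zero_le) hbound

/-- If `u_n → u` in `BV` norm (uniformly and in variation), with `u, u_n` right continuous
of bounded variation on `[0,T]` and `V(u,[0,T]) > 0`, then the normalized arc length
functions satisfy `V(ℓ_n - ℓ, [0,T]) → 0`. -/
theorem stmt_19 {H : Type*} [NormedAddCommGroup H] [InnerProductSpace ℝ H] [CompleteSpace H]
    (T : ℝ) (hT : 0 < T)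
    (u : ℝ → H) (un : ℕ → ℝ → H)
    (hrc : ∀ t ∈ Set.Ico 0 T, Filter.Tendsto u (𝓝[Set.Icc 0 T ∩ Set.Ioi t] t) (𝓝 (u t)))
    (hrcn : ∀ n, ∀ t ∈ Set.Ico 0 T,
        Filter.Tendsto (un n) (𝓝[Set.Icc 0 T ∩ Set.Ioi t] t) (𝓝 (un n t)))
    (hbv : BoundedVariationOn u (Set.Icc 0 T))
    (hbvn : ∀ n, BoundedVariationOn (un n) (Set.Icc 0 T))
    (hunif : TendstoUniformlyOn un u atTop (Set.Icc 0 T))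
    (hvar : Filter.Tendsto (fun n => eVariationOn (fun t => un n t - u t) (Set.Icc 0 T))
        atTop (𝓝 0))
    (hVpos : 0 < (eVariationOn u (Set.Icc 0 T)).toReal)
    (ℓ : ℝ → ℝ)
    (hℓ : ∀ t, ℓ t = (T / (eVariationOn u (Set.Icc 0 T)).toReal)
        * (eVariationOn u (Set.Icc 0 t)).toReal)
    (ℓn : ℕ → ℝ → ℝ)
    (hℓn : ∀ n t, ℓn n t = (T / (eVariationOn (un n) (Set.Icc 0 T)).toReal)
        * (eVariationOn (un n) (Set.Icc 0 t)).toReal) :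
    Filter.Tendsto (fun n => eVariationOn (fun t => ℓn n t - ℓ t) (Set.Icc 0 T))
      atTop (𝓝 0) :=
  stmt_19_general T u un hvar hVpos ℓ hℓ ℓn hℓn
end
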